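/- Projections of optimal embeddings yield eigenvectors of the algebraic connectivity (Proposition 3): let w ∈ ℝ^N with w_i ≥ 0 for all i, and let λ := λ2(L(w)) be the second smallest eigenvalue of L(w). Let U be an n×n real matrix and set X := UᵀU. Assume the complementary-slackness conditions ⟨X, e_n e_nᵀ⟩ = 0 and ⟨X, L(w) − λ·I⟩ = 0. Then for every vector p ∈ ℝ^n, the projection Uᵀp satisfies L(w)·(Uᵀp) = λ·(Uᵀp); that is, every one-dimensional projection of the embedding lies in the eigenspace of L(w) corresponding to λ2. -/

import Mathlib

/-!
`L(w)` is positive semidefinite with the all-ones vector `e` in its kernel. In an orthonormal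
eigenbasis, if `λ₂ > 0` then `e` only meets the eigenvalue `λ₁ = 0`, so `xᵀ L(w) x ≥ λ₂ ‖x‖²`
for `x ⊥ e`; that is, `M = L(w) - λ₂ I + (λ₂ / n) e eᵀ` is positive semidefinite.
A positive semidefinite `M = BᵀB` with `⟨UᵀU, M⟩ = ‖BUᵀ‖²_F = 0` satisfies `M Uᵀ = 0`.
Applied to `e eᵀ` and to `M`, the two slackness conditions give `e eᵀ Uᵀ = 0` and `M Uᵀ = 0`,
hence `L(w) Uᵀ = λ₂ Uᵀ`.
-/

open Matrix

/-- Eigenvalues of a real symmetric matrix, listed in nondecreasing order with multiplicity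
(junk value `0` if the matrix is not Hermitian). -/
noncomputable def sortedEigs {m : ℕ} (A : Matrix (Fin m) (Fin m) ℝ) : Fin m → ℝ :=
  if hA : A.IsHermitian then fun k => hA.eigenvalues (Tuple.sort hA.eigenvalues k) else 0

/-- The supra-Laplacian `L(w) = [[L1 + W, -W], [-W, L2 + W]]` of a two-layer multiplex,
as a matrix indexed by `Fin (N + N)`. -/
noncomputable def supraLap {N : ℕ} (L1 L2 : Matrix (Fin N) (Fin N) ℝ) (w : Fin N → ℝ) :
    Matrix (Fin (N + N)) (Fin (N + N)) ℝ :=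
  Matrix.reindex finSumFinEquiv finSumFinEquiv
    (Matrix.fromBlocks (L1 + Matrix.diagonal w) (-(Matrix.diagonal w))
      (-(Matrix.diagonal w)) (L2 + Matrix.diagonal w))

/-- The interlayer edge matrix `L_{i,i+N} = (δ_i - δ_{i+N})(δ_i - δ_{i+N})ᵀ`. -/
noncomputable def interE {N : ℕ} (i : Fin N) : Matrix (Fin (N + N)) (Fin (N + N)) ℝ :=
  Matrix.vecMulVec
    (Pi.single (Fin.castAdd N i) 1 - Pi.single (Fin.natAdd N i) 1)
    (Pi.single (Fin.castAdd N i) 1 - Pi.single (Fin.natAdd N i) 1)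

/-- The matrix inner product `⟨A, B⟩ = trace(AᵀB)`. -/
noncomputable def mip {m : ℕ} (A B : Matrix (Fin m) (Fin m) ℝ) : ℝ := (Aᵀ * B).trace

/-- The block-diagonal Laplacian `L0 = diag(L1, L2)` of the disjoint union of the layers. -/
noncomputable def L0big {N : ℕ} (L1 L2 : Matrix (Fin N) (Fin N) ℝ) :
    Matrix (Fin (N + N)) (Fin (N + N)) ℝ :=
  Matrix.reindex finSumFinEquiv finSumFinEquiv (Matrix.fromBlocks L1 0 0 L2)

/-- The vector `z = (e; -e) ∈ ℝ^n`. -/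
noncomputable def zvec (N : ℕ) : Fin (N + N) → ℝ :=
  fun k => if (k : ℕ) < N then 1 else -1

theorem Matrix.PosSemidef.fromBlocks_zero {n R : Type*} [Fintype n] [Ring R] [PartialOrder R]
    [StarRing R] [AddLeftMono R] {A B : Matrix n n R} (hA : A.PosSemidef) (hB : B.PosSemidef) :
    (fromBlocks A 0 0 B).PosSemidef := by
  refine .of_dotProduct_mulVec_nonneg (hA.1.fromBlocks (by simp) hB.1) fun x => ?_
  rw [← Sum.elim_comp_inl_inr x, fromBlocks_mulVec, Function.star_sumElim,
    sumElim_dotProduct_sumElim]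
  simpa using add_nonneg (hA.dotProduct_mulVec_nonneg _) (hB.dotProduct_mulVec_nonneg _)

theorem Matrix.PosSemidef.fromBlocks_neg_neg {n R : Type*} [Fintype n] [DecidableEq n] [Ring R]
    [PartialOrder R] [StarRing R] {D : Matrix n n R} (hD : D.PosSemidef) :
    (fromBlocks D (-D) (-D) D).PosSemidef := by
  convert hD.conjTranspose_mul_mul_same (fromCols 1 (-1) : Matrix n (n ⊕ n) R) using 1
  rw [conjTranspose_fromCols_eq_fromRows_conjTranspose, fromRows_mul, fromRows_mul_fromCols]
  simp

theorem supraLap_posSemidef {N : ℕ} {L1 L2 : Matrix (Fin N) (Fin N) ℝ} (hL1 : L1.PosSemidef)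
    (hL2 : L2.PosSemidef) {w : Fin N → ℝ} (hw : ∀ i, 0 ≤ w i) :
    (supraLap L1 L2 w).PosSemidef := by
  have hsplit : fromBlocks (L1 + diagonal w) (-diagonal w) (-diagonal w) (L2 + diagonal w) =
      fromBlocks L1 0 0 L2 + fromBlocks (diagonal w) (-diagonal w) (-diagonal w) (diagonal w) := by
    simp [fromBlocks_add]
  rw [supraLap, reindex_apply, posSemidef_submatrix_equiv, hsplit]
  exact (hL1.fromBlocks_zero hL2).add (PosSemidef.diagonal hw).fromBlocks_neg_neg

theorem supraLap_mulVec_one {N : ℕ} {L1 L2 : Matrix (Fin N) (Fin N) ℝ}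
    (hL1e : L1 *ᵥ (fun _ => (1 : ℝ)) = 0) (hL2e : L2 *ᵥ (fun _ => (1 : ℝ)) = 0)
    (w : Fin N → ℝ) :
    supraLap L1 L2 w *ᵥ (fun _ => (1 : ℝ)) = 0 := by
  rw [supraLap, reindex_apply, submatrix_mulVec_equiv, fromBlocks_mulVec]
  simp only [Function.comp_def, add_mulVec, neg_mulVec, hL1e, hL2e, zero_add, add_neg_cancel,
    neg_add_cancel, Sum.elim_zero_zero, Pi.zero_apply]
  rfl

namespace Matrix.IsHermitian

variable {n : Type*} [Fintype n] [DecidableEq n] {A : Matrix n n ℝ} (hA : A.IsHermitian)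
include hA

lemma eigenvectorUnitary_mul_transpose :
    (hA.eigenvectorUnitary : Matrix n n ℝ) * (hA.eigenvectorUnitary : Matrix n n ℝ)ᵀ = 1 := by
  simpa [star_eq_conjTranspose] using Unitary.coe_mul_star_self hA.eigenvectorUnitary

lemma transpose_eigenvectorUnitary_mul :
    (hA.eigenvectorUnitary : Matrix n n ℝ)ᵀ * A =
      diagonal hA.eigenvalues * (hA.eigenvectorUnitary : Matrix n n ℝ)ᵀ := by
  have h := hA.conjStarAlgAut_star_eigenvectorUnitary
  rw [Unitary.conjStarAlgAut_star_apply, RCLike.ofReal_real_eq_id, Function.id_comp,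
    star_eq_conjTranspose, conjTranspose_eq_transpose_of_trivial] at h
  rw [← h, Matrix.mul_assoc _ _ (hA.eigenvectorUnitary : Matrix n n ℝ)ᵀ, Matrix.mul_assoc,
    eigenvectorUnitary_mul_transpose, Matrix.mul_one]

lemma dotProduct_transpose_eigenvectorUnitary_mulVec (x y : n → ℝ) :
    ((hA.eigenvectorUnitary : Matrix n n ℝ)ᵀ *ᵥ x) ⬝ᵥ
      ((hA.eigenvectorUnitary : Matrix n n ℝ)ᵀ *ᵥ y) = x ⬝ᵥ y := by
  rw [mulVec_transpose, ← dotProduct_mulVec, mulVec_mulVec, eigenvectorUnitary_mul_transpose,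
    one_mulVec]

lemma transpose_eigenvectorUnitary_mulVec_mulVec (x : n → ℝ) (k : n) :
    ((hA.eigenvectorUnitary : Matrix n n ℝ)ᵀ *ᵥ (A *ᵥ x)) k
      = hA.eigenvalues k * ((hA.eigenvectorUnitary : Matrix n n ℝ)ᵀ *ᵥ x) k := by
  rw [mulVec_mulVec, transpose_eigenvectorUnitary_mul, ← mulVec_mulVec, mulVec_diagonal]

lemma dotProduct_mulVec_eq_sum_eigenvalues (x : n → ℝ) :
    x ⬝ᵥ (A *ᵥ x) =
      ∑ k, hA.eigenvalues k * ((hA.eigenvectorUnitary : Matrix n n ℝ)ᵀ *ᵥ x) k ^ 2 := by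
  rw [← dotProduct_transpose_eigenvectorUnitary_mulVec hA, dotProduct]
  refine Finset.sum_congr rfl fun k _ => ?_
  rw [transpose_eigenvectorUnitary_mulVec_mulVec]
  ring

theorem mul_dotProduct_self_le_dotProduct_mulVec {e : n → ℝ} (he : e ≠ 0) (hAe : A *ᵥ e = 0)
    {k₀ : n} (h₀ : 0 ≤ hA.eigenvalues k₀) {lam : ℝ}
    (hlam : ∀ k ≠ k₀, lam ≤ hA.eigenvalues k)
    {v : n → ℝ} (hv : e ⬝ᵥ v = 0) :
    lam * (v ⬝ᵥ v) ≤ v ⬝ᵥ (A *ᵥ v) := by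
  set V := (hA.eigenvectorUnitary : Matrix n n ℝ)ᵀ
  set μ := hA.eigenvalues
  set c := V *ᵥ v
  set d := V *ᵥ e
  have hμd : ∀ k, μ k * d k = 0 := fun k => by
    rw [← hA.transpose_eigenvectorUnitary_mulVec_mulVec, hAe, mulVec_zero, Pi.zero_apply]
  have hdc : d ⬝ᵥ c = 0 := by rw [hA.dotProduct_transpose_eigenvectorUnitary_mulVec, hv]
  have hd : d ≠ 0 := fun h => he <| dotProduct_self_eq_zero.1 <| by
    rw [← hA.dotProduct_transpose_eigenvectorUnitary_mulVec]
    change d ⬝ᵥ d = 0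
    rw [h, zero_dotProduct]
  -- for `lam > 0`, `d = Vᵀ e` is supported on `k₀`, so `c ⊥ d` forces `c k₀ = 0`
  have hc₀ : lam ≤ 0 ∨ c k₀ = 0 := by
    refine or_iff_not_imp_left.2 fun hpos => ?_
    have hdk : ∀ k ≠ k₀, d k = 0 := fun k hk =>
      (mul_eq_zero.1 (hμd k)).resolve_left (by linarith [hlam k hk])
    have hd₀ : d k₀ ≠ 0 := fun h₀ => hd <| funext fun k => by
      by_cases hk : k = k₀
      · rw [hk, h₀, Pi.zero_apply]
      · rw [hdk k hk, Pi.zero_apply]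
    rw [dotProduct, Finset.sum_eq_single k₀ (fun k _ hk => by rw [hdk k hk, zero_mul])
      (by simp)] at hdc
    exact (mul_eq_zero.1 hdc).resolve_left hd₀
  rw [hA.dotProduct_mulVec_eq_sum_eigenvalues,
    ← hA.dotProduct_transpose_eigenvectorUnitary_mulVec, dotProduct, Finset.mul_sum]
  refine Finset.sum_le_sum fun k _ => ?_
  change lam * (c k * c k) ≤ μ k * c k ^ 2
  rw [sq]
  by_cases hk : k = k₀
  · subst hk
    rcases hc₀ with h | h
    · nlinarith [mul_self_nonneg (c k)]
    · rw [h, mul_zero, mul_zero, mul_zero]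
  · exact mul_le_mul_of_nonneg_right (hlam k hk) (mul_self_nonneg _)

end Matrix.IsHermitian

lemma sortedEigs_one_le_eigenvalues {m : ℕ} {A : Matrix (Fin m) (Fin m) ℝ} (hA : A.IsHermitian)
    (hm : 1 < m) {k : Fin m} (hk : k ≠ Tuple.sort hA.eigenvalues ⟨0, by omega⟩) :
    sortedEigs A ⟨1, hm⟩ ≤ hA.eigenvalues k := by
  obtain ⟨j, rfl⟩ := (Tuple.sort hA.eigenvalues).surjective k
  have hj : (⟨1, hm⟩ : Fin m) ≤ j := by
    have := Fin.val_ne_of_ne ((Tuple.sort hA.eigenvalues).injective.ne_iff.1 hk)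
    rw [Fin.le_def]
    simp only at this ⊢
    omega
  rw [sortedEigs, dif_pos hA]
  exact Tuple.monotone_sort hA.eigenvalues hj

theorem Matrix.IsHermitian.posSemidef_sub_smul_one_add_smul_vecMulVec {n : Type*} [Fintype n]
    [DecidableEq n] {A : Matrix n n ℝ} (hA : A.IsHermitian) {e : n → ℝ} (he : e ≠ 0)
    (hAe : A *ᵥ e = 0) {lam : ℝ}
    (hgap : ∀ v, e ⬝ᵥ v = 0 → lam * (v ⬝ᵥ v) ≤ v ⬝ᵥ (A *ᵥ v)) :
    (A - lam • 1 + (lam / (e ⬝ᵥ e)) • vecMulVec e e).PosSemidef := by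
  have hAt : Aᵀ = A := (isHermitian_iff_isSymm.1 hA).eq
  have hee : e ⬝ᵥ e ≠ 0 := mt dotProduct_self_eq_zero.1 he
  have hM : (A - lam • 1 + (lam / (e ⬝ᵥ e)) • vecMulVec e e).IsHermitian := by
    rw [IsHermitian, conjTranspose_eq_transpose_of_trivial]
    simp [hAt]
  refine .of_dotProduct_mulVec_nonneg hM fun x => ?_
  -- the quadratic form at `x` is that of `A - lam • 1` at the projection `y` of `x` onto `e^⊥`
  set α := (e ⬝ᵥ x) / (e ⬝ᵥ e)
  set y := x - α • e
  have hey : e ⬝ᵥ y = 0 := by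
    simp only [y, α, dotProduct_sub, dotProduct_smul, smul_eq_mul]
    field_simp
    ring
  have hx : x = y + α • e := by simp [y]
  have hAx : x ⬝ᵥ (A *ᵥ x) = y ⬝ᵥ (A *ᵥ y) := by
    have hAy : e ⬝ᵥ (A *ᵥ y) = 0 := by
      rw [dotProduct_mulVec, ← mulVec_transpose, hAt, hAe, zero_dotProduct]
    rw [hx, mulVec_add, mulVec_smul, hAe, smul_zero, add_zero, add_dotProduct, smul_dotProduct,
      hAy, smul_zero, add_zero]
  have hxx : x ⬝ᵥ x = y ⬝ᵥ y + (e ⬝ᵥ x) ^ 2 / (e ⬝ᵥ e) := by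
    conv_lhs => rw [hx]
    simp only [add_dotProduct, dotProduct_add, smul_dotProduct, dotProduct_smul, smul_eq_mul,
      hey, dotProduct_comm y e, α]
    field_simp
    ring
  rw [star_trivial, add_mulVec, sub_mulVec, smul_mulVec, smul_mulVec, one_mulVec,
    vecMulVec_mulVec, dotProduct_add, dotProduct_sub, dotProduct_smul, dotProduct_smul,
    op_smul_eq_smul, dotProduct_smul, dotProduct_comm x e, hAx, hxx]
  simp only [smul_eq_mul]
  have hsq : lam / (e ⬝ᵥ e) * ((e ⬝ᵥ x) * (e ⬝ᵥ x)) = lam * ((e ⬝ᵥ x) ^ 2 / (e ⬝ᵥ e)) := by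
    ring
  linarith [hgap y hey]

open scoped MatrixOrder in
theorem Matrix.PosSemidef.mul_transpose_eq_zero_of_mip_eq_zero {m : ℕ}
    {M U : Matrix (Fin m) (Fin m) ℝ} (hM : M.PosSemidef) (h : mip (Uᵀ * U) M = 0) :
    M * Uᵀ = 0 := by
  obtain ⟨B, rfl⟩ := CStarAlgebra.nonneg_iff_eq_star_mul_self.mp hM.nonneg
  have hBU : B * Uᵀ = 0 := by
    refine trace_mul_conjTranspose_self_eq_zero_iff.1 ?_
    rw [← h, mip, conjTranspose_eq_transpose_of_trivial, star_eq_conjTranspose,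
      conjTranspose_eq_transpose_of_trivial]
    simp only [transpose_mul, transpose_transpose, Matrix.mul_assoc]
    rw [trace_mul_comm]
    simp only [Matrix.mul_assoc]
  rw [Matrix.mul_assoc, hBU, Matrix.mul_zero]

/-- Projections of optimal embeddings yield eigenvectors of the algebraic connectivity:
if `X = UᵀU` satisfies the complementary-slackness conditions `⟨X, e_n e_nᵀ⟩ = 0` and
`⟨X, L(w) - λ₂·I⟩ = 0`, then `L(w)·(Uᵀp) = λ₂·(Uᵀp)` for every `p`. -/
theorem stmt7 (N : ℕ) (hN : 1 ≤ N)
    (L1 L2 : Matrix (Fin N) (Fin N) ℝ)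
    (hL1 : L1.PosSemidef) (hL2 : L2.PosSemidef)
    (hL1e : L1 *ᵥ (fun _ => (1 : ℝ)) = 0) (hL2e : L2 *ᵥ (fun _ => (1 : ℝ)) = 0)
    (w : Fin N → ℝ) (hw : ∀ i, 0 ≤ w i)
    (lam : ℝ) (hlam : lam = sortedEigs (supraLap L1 L2 w) ⟨1, by omega⟩)
    (U : Matrix (Fin (N + N)) (Fin (N + N)) ℝ)
    (hXe : mip (Uᵀ * U) (Matrix.vecMulVec (fun _ => (1 : ℝ)) (fun _ => (1 : ℝ))) = 0)
    (hXs : mip (Uᵀ * U)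
      (supraLap L1 L2 w - lam • (1 : Matrix (Fin (N + N)) (Fin (N + N)) ℝ)) = 0) :
    ∀ p : Fin (N + N) → ℝ,
      (supraLap L1 L2 w) *ᵥ (Uᵀ *ᵥ p) = lam • (Uᵀ *ᵥ p) := by
  set A := supraLap L1 L2 w
  set e : Fin (N + N) → ℝ := fun _ => 1
  have hA : A.PosSemidef := supraLap_posSemidef hL1 hL2 hw
  have hAe : A *ᵥ e = 0 := supraLap_mulVec_one hL1e hL2e w
  have he : e ≠ 0 := fun h => one_ne_zero (congrFun h ⟨0, by omega⟩)
  have hgap (v : Fin (N + N) → ℝ) (hv : e ⬝ᵥ v = 0) :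
      lam * (v ⬝ᵥ v) ≤ v ⬝ᵥ (A *ᵥ v) :=
    hA.1.mul_dotProduct_self_le_dotProduct_mulVec he hAe (hA.eigenvalues_nonneg _)
      (fun k hk => hlam ▸ sortedEigs_one_le_eigenvalues hA.1 (by omega) hk) hv
  have hJU : vecMulVec e e * Uᵀ = 0 := by
    refine PosSemidef.mul_transpose_eq_zero_of_mip_eq_zero ?_ hXe
    simpa using posSemidef_vecMulVec_self_star e
  have hM := hA.1.posSemidef_sub_smul_one_add_smul_vecMulVec he hAe hgap
  have hMU : (A - lam • 1 + (lam / (e ⬝ᵥ e)) • vecMulVec e e) * Uᵀ = 0 := by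
    refine hM.mul_transpose_eq_zero_of_mip_eq_zero ?_
    unfold mip at hXs hXe ⊢
    rw [Matrix.mul_add, trace_add, Matrix.mul_smul, trace_smul, hXs, hXe, smul_zero, add_zero]
  have hAU : A * Uᵀ = lam • Uᵀ := by
    rwa [add_mul, sub_mul, smul_mul, smul_mul, hJU, smul_zero, add_zero, one_mul,
      sub_eq_zero] at hMU
  intro p
  rw [mulVec_mulVec, hAU, smul_mulVec]
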